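/- arXiv:1112.1238 — 2 statements merged into one kernel-verified Lean document; each statement's English description precedes it below -/
import Mathlib

section
/- Let k | n, α a primitive element of F_{q^n}, and c = (q^n−1)/(q^k−1). Then the subspaces α^i·F_{q^k}, for i = 0,...,c−1, are pairwise distinct and pairwise intersect trivially, and their union is all of F_{q^n}; i.e., S = {α^i·F_{q^k} : 0 ≤ i < c} is a spread of k-dimensional F_q-subspaces of F_{q^n}. -/
/-!
Every nonzero `x ∈ K` is a power `α ^ m`. The nonzero elements of `E` are exactly the
`(q ^ k - 1)`-th roots of unity in `K`, and `α` has order `q ^ n - 1 = c (q ^ k - 1)` (the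
divisibility because `K` is a vector space over `E`), so `α ^ m ∈ E ↔ c ∣ m`. Hence `α ^ m ∈ α ^ i E ↔ m ≡ i [ZMOD c]`: the translates `α ^ i E`,
`0 ≤ i < c`, meet only in `0` and cover `K`. Multiplication by `α ^ i` is an injective `F`-linear
map, so each translate has the dimension `k` of `E`.
-/

open Module Polynomial Finset

theorem exists_zpow_eq_of_forall_mem_zpowers {G₀ : Type*} [GroupWithZero G₀] {α : G₀ˣ}
    (hα : ∀ x : G₀ˣ, x ∈ Subgroup.zpowers α) {x : G₀} (hx : x ≠ 0) : ∃ m : ℤ, (α : G₀) ^ m = x := by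
  obtain ⟨m, hm⟩ := Subgroup.mem_zpowers_iff.1 (hα (Units.mk0 x hx))
  exact ⟨m, by rw [← Units.val_zpow_eq_zpow_val, hm, Units.val_mk0]⟩

theorem Module.finrank_eq_of_natCard_eq_pow {F V : Type*} [Field F] [Finite F] [AddCommGroup V]
    [Module F V] [Module.Finite F V] {k : ℕ} (h : Nat.card V = Nat.card F ^ k) :
    finrank F V = k :=
  Nat.pow_right_injective Finite.one_lt_card (natCard_eq_pow_finrank.symm.trans h)

theorem zpow_pow_eq_one_iff_dvd {G : Type*} [Group G] {g : G} {d : ℕ} (hd : d ∣ orderOf g)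
    (hd0 : d ≠ 0) (m : ℤ) : (g ^ m) ^ d = 1 ↔ ((orderOf g / d : ℕ) : ℤ) ∣ m := by
  rw [← zpow_natCast, ← zpow_mul, ← orderOf_dvd_iff_zpow_eq_one,
    ← Nat.div_mul_cancel hd, Nat.cast_mul, Nat.mul_div_cancel _ (Nat.pos_of_ne_zero hd0)]
  exact Int.mul_dvd_mul_iff_right (by exact_mod_cast hd0)

theorem Int.not_natCast_dvd_sub_of_lt {c i j : ℕ} (hi : i < c) (hj : j < c) (hij : i ≠ j) :
    ¬ (c : ℤ) ∣ (i : ℤ) - j :=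
  fun h ↦ hij ((Nat.modEq_iff_dvd.2 h).eq_of_lt_of_lt hj hi).symm

namespace Subfield

variable {K : Type*} [Field K]

theorem pow_natCard_sub_one_eq_one (E : Subfield K) [Finite E] {x : K} (hxE : x ∈ E)
    (hx : x ≠ 0) : x ^ (Nat.card E - 1) = 1 := by
  have := Fintype.ofFinite E
  have h := FiniteField.pow_card_sub_one_eq_one (⟨x, hxE⟩ : E) fun h ↦ hx congr(Subtype.val $h)
  rw [Fintype.card_eq_nat_card] at h
  simpa using congrArg Subtype.val h

/-- The nonzero elements of `E` already exhaust the at most `#E - 1` roots of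
`X ^ (#E - 1) - 1` in `K`. -/
theorem mem_iff_pow_natCard_sub_one_eq_one (E : Subfield K) [Finite E] {x : K} (hx : x ≠ 0) :
    x ∈ E ↔ x ^ (Nat.card E - 1) = 1 := by
  classical
  refine ⟨fun hxE ↦ E.pow_natCard_sub_one_eq_one hxE hx, fun h ↦ ?_⟩
  have hpos : 0 < Nat.card E - 1 := Nat.sub_pos_of_lt Finite.one_lt_card
  set S := (Set.toFinite (E : Set K)).toFinset.erase 0
  have hS : ∀ {y}, y ∈ S ↔ y ∈ E ∧ y ≠ 0 := by simp [S, and_comm]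
  have hSR : S ⊆ nthRootsFinset (Nat.card E - 1) (1 : K) := fun y hy ↦
    (mem_nthRootsFinset hpos 1).2 (E.pow_natCard_sub_one_eq_one (hS.1 hy).1 (hS.1 hy).2)
  have hcard : #(nthRootsFinset (Nat.card E - 1) (1 : K)) ≤ #S :=
    calc #(nthRootsFinset (Nat.card E - 1) (1 : K))
        ≤ Nat.card E - 1 := (Multiset.toFinset_card_le _).trans (card_nthRoots _ _)
      _ = #S := by
        rw [Finset.card_erase_of_mem (by simp [E.zero_mem]), ← Nat.card_eq_card_finite_toFinset]
        rfl
  have hxS : x ∈ S := by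
    rw [Finset.eq_of_subset_of_card_le hSR hcard]
    exact (mem_nthRootsFinset hpos 1).2 h
  exact (hS.1 hxS).1

variable [Finite K]

theorem natCard_sub_one_dvd (E : Subfield K) : Nat.card E - 1 ∣ Nat.card K - 1 := by
  rw [Module.natCard_eq_pow_finrank (K := E) (V := K)]
  simpa using Nat.sub_dvd_pow_sub_pow (Nat.card E) 1 (finrank E K)

theorem natCard_sub_one_div_pos (E : Subfield K) : 0 < (Nat.card K - 1) / (Nat.card E - 1) :=
  Nat.div_pos (Nat.le_of_dvd (Nat.sub_pos_of_lt Finite.one_lt_card) E.natCard_sub_one_dvd)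
    (Nat.sub_pos_of_lt Finite.one_lt_card)

theorem zpow_mem_iff_dvd (E : Subfield K) {α : Kˣ} (hα : ∀ x : Kˣ, x ∈ Subgroup.zpowers α)
    (m : ℤ) : (α : K) ^ m ∈ E ↔ (((Nat.card K - 1) / (Nat.card E - 1) : ℕ) : ℤ) ∣ m := by
  have hord : orderOf α = Nat.card K - 1 := by
    rw [orderOf_eq_card_of_forall_mem_zpowers hα, Nat.card_units]
  rw [← Units.val_zpow_eq_zpow_val, E.mem_iff_pow_natCard_sub_one_eq_one (Units.ne_zero _),
    ← Units.val_pow_eq_pow_val, Units.val_eq_one, zpow_pow_eq_one_iff_dvd, hord]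
  · exact hord ▸ E.natCard_sub_one_dvd
  · exact (Nat.sub_pos_of_lt Finite.one_lt_card).ne'

end Subfield

namespace Submodule

variable {F K : Type*} [Field F] [Field K] [Algebra F K] {a : K}

theorem mem_map_mulLeft_iff (ha : a ≠ 0) (V : Submodule F K) {x : K} :
    x ∈ V.map (LinearMap.mulLeft F a) ↔ a⁻¹ * x ∈ V := by
  simp only [Submodule.mem_map, LinearMap.mulLeft_apply]
  constructor
  · rintro ⟨y, hy, rfl⟩
    rwa [inv_mul_cancel_left₀ ha]
  · exact fun h ↦ ⟨_, h, mul_inv_cancel_left₀ ha x⟩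

theorem finrank_map_mulLeft (ha : a ≠ 0) (V : Submodule F K) :
    finrank F (V.map (LinearMap.mulLeft F a)) = finrank F V :=
  (LinearEquiv.finrank_eq (Submodule.equivMapOfInjective _ (mul_right_injective₀ ha) V)).symm

variable {V : Submodule F K} {α : K} {c : ℕ}

theorem zpow_mem_map_mulLeft_pow_iff (hα : α ≠ 0) (hV : ∀ m : ℤ, α ^ m ∈ V ↔ (c : ℤ) ∣ m)
    (i : ℕ) (m : ℤ) : α ^ m ∈ V.map (LinearMap.mulLeft F (α ^ i)) ↔ (c : ℤ) ∣ m - i := by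
  rw [mem_map_mulLeft_iff (pow_ne_zero _ hα), ← zpow_natCast, ← zpow_neg, ← zpow_add₀ hα, hV,
    neg_add_eq_sub]

theorem map_mulLeft_pow_ne (hα : α ≠ 0) (hV : ∀ m : ℤ, α ^ m ∈ V ↔ (c : ℤ) ∣ m) {i j : ℕ}
    (hi : i < c) (hj : j < c) (hij : i ≠ j) :
    V.map (LinearMap.mulLeft F (α ^ i)) ≠ V.map (LinearMap.mulLeft F (α ^ j)) := by
  intro h
  apply Int.not_natCast_dvd_sub_of_lt hi hj hij
  rw [← zpow_mem_map_mulLeft_pow_iff hα hV, ← h, zpow_mem_map_mulLeft_pow_iff hα hV, sub_self]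
  exact dvd_zero _

theorem map_mulLeft_pow_inf_eq_bot (hα : α ≠ 0) (hV : ∀ m : ℤ, α ^ m ∈ V ↔ (c : ℤ) ∣ m)
    (hgen : ∀ x : K, x ≠ 0 → ∃ m : ℤ, α ^ m = x) {i j : ℕ} (hi : i < c) (hj : j < c)
    (hij : i ≠ j) :
    V.map (LinearMap.mulLeft F (α ^ i)) ⊓ V.map (LinearMap.mulLeft F (α ^ j)) = ⊥ := by
  refine (Submodule.eq_bot_iff _).2 fun x hx ↦ by_contra fun hx0 ↦ Int.not_natCast_dvd_sub_of_lt hi hj hij ?_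
  obtain ⟨m, rfl⟩ := hgen x hx0
  rw [mem_inf, zpow_mem_map_mulLeft_pow_iff hα hV, zpow_mem_map_mulLeft_pow_iff hα hV] at hx
  simpa using dvd_sub hx.2 hx.1

theorem exists_mem_map_mulLeft_pow (hα : α ≠ 0) (hV : ∀ m : ℤ, α ^ m ∈ V ↔ (c : ℤ) ∣ m)
    (hgen : ∀ x : K, x ≠ 0 → ∃ m : ℤ, α ^ m = x) (hc : 0 < c) (x : K) :
    ∃ i < c, x ∈ V.map (LinearMap.mulLeft F (α ^ i)) := by
  rcases eq_or_ne x 0 with rfl | hx0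
  · exact ⟨0, hc, zero_mem _⟩
  obtain ⟨m, rfl⟩ := hgen x hx0
  have hmod : 0 ≤ m % c := Int.emod_nonneg m (by exact_mod_cast hc.ne')
  have hlt : m % c < c := Int.emod_lt_of_pos m (by exact_mod_cast hc)
  refine ⟨(m % c).toNat, by omega, (zpow_mem_map_mulLeft_pow_iff hα hV _ m).2 ?_⟩
  rw [Int.toNat_of_nonneg hmod, Int.emod_def]
  simp

end Submodule

theorem stmt15_general (F K : Type*) [Field F] [Fintype F] [Field K] [Fintype K]
    [Algebra F K] (n k q c : ℕ) (hq : Fintype.card F = q)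
    (hn : finrank F K = n)
    (hc : c = (q ^ n - 1) / (q ^ k - 1))
    (α : Kˣ) (hα : ∀ x : Kˣ, x ∈ Subgroup.zpowers α)
    (E : IntermediateField F K) (hE : Nat.card E = q ^ k)
    (W : ℕ → Submodule F K)
    (hW : ∀ i, W i = Submodule.map (LinearMap.mulLeft F ((α : K) ^ i))
        (Subalgebra.toSubmodule E.toSubalgebra)) :
    (∀ i, finrank F ↥(W i) = k) ∧
    (∀ i j, i < c → j < c → i ≠ j → W i ≠ W j ∧ W i ⊓ W j = ⊥) ∧
    (∀ x : K, ∃ i, i < c ∧ x ∈ W i) := by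
  have hqF : Nat.card F = q := Nat.card_eq_fintype_card.trans hq
  have hcard : c = (Nat.card K - 1) / (Nat.card E.toSubfield - 1) := by
    rw [hc, ← hE, ← hqF, ← hn, ← Module.natCard_eq_pow_finrank]
    rfl
  have hc0 : 0 < c := hcard ▸ E.toSubfield.natCard_sub_one_div_pos
  have hmem : ∀ m : ℤ, (α : K) ^ m ∈ Subalgebra.toSubmodule E.toSubalgebra ↔ (c : ℤ) ∣ m :=
    hcard ▸ E.toSubfield.zpow_mem_iff_dvd hα
  have hgen : ∀ x : K, x ≠ 0 → ∃ m : ℤ, (α : K) ^ m = x :=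
    fun _ ↦ exists_zpow_eq_of_forall_mem_zpowers hα
  obtain rfl : W = fun i ↦ _ := funext hW
  beta_reduce
  refine ⟨fun i ↦ ?_, fun i j hi hj hij ↦ ⟨?_, ?_⟩,
    Submodule.exists_mem_map_mulLeft_pow α.ne_zero hmem hgen hc0⟩
  · rw [Submodule.finrank_map_mulLeft (pow_ne_zero _ α.ne_zero), Subalgebra.finrank_toSubmodule]
    exact Module.finrank_eq_of_natCard_eq_pow (hqF ▸ hE)
  · exact Submodule.map_mulLeft_pow_ne α.ne_zero hmem hi hj hij
  · exact Submodule.map_mulLeft_pow_inf_eq_bot α.ne_zero hmem hgen hi hj hij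

/-- Let `k ∣ n`, `α` a primitive element of `F_{q^n}` and
`c = (q^n - 1)/(q^k - 1)`.  The subspaces `α^i · F_{q^k}`, `0 ≤ i < c`, are
pairwise distinct, pairwise intersect trivially, and cover `F_{q^n}`; i.e.
they form a spread of `k`-dimensional `F_q`-subspaces of `F_{q^n}`. -/
theorem stmt15 (F K : Type*) [Field F] [Fintype F] [Field K] [Fintype K]
    [Algebra F K] (n k q c : ℕ) (hq : Fintype.card F = q)
    (hn : finrank F K = n) (hk : 0 < k) (hkn : k ∣ n)
    (hc : c = (q ^ n - 1) / (q ^ k - 1))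
    (α : Kˣ) (hα : ∀ x : Kˣ, x ∈ Subgroup.zpowers α)
    (E : IntermediateField F K) (hE : Nat.card E = q ^ k)
    (W : ℕ → Submodule F K)
    (hW : ∀ i, W i = Submodule.map (LinearMap.mulLeft F ((α : K) ^ i))
        (Subalgebra.toSubmodule E.toSubalgebra)) :
    (∀ i, finrank F ↥(W i) = k) ∧
    (∀ i j, i < c → j < c → i ≠ j → W i ≠ W j ∧ W i ⊓ W j = ⊥) ∧
    (∀ x : K, ∃ i, i < c ∧ x ∈ W i) :=
  stmt15_general F K n k q c hq hn hc α hα E hE W hW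
end

section
/- Let V be a k-dimensional subspace of F_q^n and R a k'-dimensional subspace with basis r_1,...,r_{k'}, such that R = V' ⊕ E where V' ≤ V and dim E = f < k'. Then the set L_f of all linear combinations of at most f+1 of the basis vectors r_i contains k'−f linearly independent elements of V. -/
/-!
Pass to the quotient by `V'`. Since `R = V' ⊔ E`, the images of the `r i` span a space of
dimension `d ≤ dim E = f`, so some `d` of them, indexed by `B`, already span it. For every
`i ∉ B` the image of `r i` is a combination of those, which gives a vector
`r i - ∑ j ∈ B, c i j • r j` of `V'` supported on `insert i B`, i.e. in `L_f`. These vectors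
are independent because each `r i` with `i ∉ B` occurs in exactly one of them.
-/

open Module Submodule Finset

section

variable {K M M' ι : Type*}

theorem exists_finset_card_eq_finrank_span_image_eq [DivisionRing K] [AddCommGroup M]
    [Module K M] [Fintype ι] (w : ι → M) :
    ∃ B : Finset ι, #B = finrank K (span K (Set.range w)) ∧
      span K (w '' B) = span K (Set.range w) := by
  classical
  obtain ⟨κ, a, ha, hspan, hli⟩ := exists_linearIndependent' K w
  have : Fintype κ := Fintype.ofInjective a ha
  refine ⟨univ.image a, ?_, ?_⟩
  · rw [card_image_of_injective _ ha, card_univ, ← hspan, finrank_span_eq_card hli]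
  · rw [← hspan, coe_image, coe_univ, Set.image_univ, Set.range_comp]

theorem LinearIndependent.linearIndependent_sub_sum_compl [Ring K] [AddCommGroup M]
    [Module K M] [Fintype ι] [DecidableEq ι] {r : ι → M} (hr : LinearIndependent K r)
    (B : Finset ι) (c : ι → ι → K) :
    LinearIndependent K (fun i : ↥Bᶜ => r i - ∑ j ∈ B, c i j • r j) := by
  have hquot : LinearIndepOn K (mkQ (span K (r '' B)) ∘ r) (↑B)ᶜ :=
    ((linearIndepOn_union_iff_quotient disjoint_compl_right).1 (hr.linearIndepOn _)).2
  refine LinearIndependent.of_comp (mkQ (span K (r '' B))) ?_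
  convert hquot.comp _
    (Equiv.subtypeEquivRight (p := (· ∈ Bᶜ)) fun _ => mem_compl).injective using 1
  ext i
  refine (Submodule.Quotient.eq _).2 ?_
  simp only [Equiv.subtypeEquivRight_apply_coe, sub_sub_cancel_left]
  exact neg_mem (sum_smul_mem _ _ fun j hj => subset_span ⟨j, hj, rfl⟩)

theorem LinearIndependent.exists_finset_linearIndependent_sub_sum_mem_ker [DivisionRing K]
    [AddCommGroup M] [Module K M] [AddCommGroup M'] [Module K M'] [Fintype ι] [DecidableEq ι]
    {r : ι → M} (hr : LinearIndependent K r) (g : M →ₗ[K] M') :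
    ∃ B : Finset ι, #B = finrank K (span K (Set.range (g ∘ r))) ∧ ∃ c : ι → ι → K,
      LinearIndependent K (fun i : ↥Bᶜ => r i - ∑ j ∈ B, c i j • r j) ∧
      ∀ i, r i - ∑ j ∈ B, c i j • r j ∈ LinearMap.ker g := by
  obtain ⟨B, hcard, hspan⟩ := exists_finset_card_eq_finrank_span_image_eq (K := K) (g ∘ r)
  have hcomb : ∀ i, ∃ c : ι → K, ∑ j ∈ B, c j • g (r j) = g (r i) := fun i =>
    (mem_span_image_finset_iff_exists_fun' K).1 (hspan ▸ subset_span (Set.mem_range_self i))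
  choose c hc using hcomb
  refine ⟨B, hcard, c, hr.linearIndependent_sub_sum_compl B c, fun i => ?_⟩
  simp [hc]

theorem sub_sum_eq_sum_insert [Ring K] [AddCommGroup M] [Module K M] [DecidableEq ι]
    (r : ι → M) {B : Finset ι} {i : ι} (hi : i ∉ B) (c : ι → K) :
    r i - ∑ j ∈ B, c j • r j = ∑ j ∈ insert i B, Function.update (-c) i 1 j • r j := by
  rw [sum_insert hi, Function.update_self, one_smul, sub_eq_add_neg, ← sum_neg_distrib]
  congr 1
  refine sum_congr rfl fun j hj => ?_
  rw [Function.update_of_ne (ne_of_mem_of_not_mem hj hi), Pi.neg_apply, neg_smul]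

theorem finrank_span_range_mkQ_comp_le [DivisionRing K] [AddCommGroup M] [Module K M]
    {N E : Submodule K M} [Module.Finite K E] {r : ι → M}
    (hr : span K (Set.range r) ≤ N ⊔ E) :
    finrank K (span K (Set.range (N.mkQ ∘ r))) ≤ finrank K E := by
  have hle : span K (Set.range (N.mkQ ∘ r)) ≤ E.map N.mkQ := by
    rw [Set.range_comp, ← map_span]
    simpa [Submodule.map_sup, mkQ_map_self] using map_mono (f := N.mkQ) hr
  exact (finrank_mono hle).trans (finrank_map_le _ _)

end

theorem stmt19_general (F : Type*) [Field F] (n k' f : ℕ)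
    (V V' E R : Submodule F (Fin n → F))
    (r : Fin k' → (Fin n → F))
    (hind : LinearIndependent F r)
    (hspan : R = Submodule.span F (Set.range r))
    (hV'V : V' ≤ V) (hsum : R = V' ⊔ E)
    (hE : finrank F ↥E = f)
    (L : Set (Fin n → F))
    (hL : L = {x | ∃ (I : Finset (Fin k')) (lam : Fin k' → F),
      I.card ≤ f + 1 ∧ x = ∑ i ∈ I, lam i • r i}) :
    ∃ s : Fin (k' - f) → (Fin n → F),
      LinearIndependent F s ∧ ∀ i, s i ∈ V ∧ s i ∈ L := by
  classical
  subst hL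
  obtain ⟨B, hB, c, hli, hker⟩ := hind.exists_finset_linearIndependent_sub_sum_mem_ker V'.mkQ
  have hBf : #B ≤ f := hB ▸ hE ▸ finrank_span_range_mkQ_comp_le (hspan ▸ hsum.le)
  obtain ⟨e⟩ : Nonempty (Fin (k' - f) ↪ ↥Bᶜ) :=
    Function.Embedding.nonempty_of_card_le (by simp; omega)
  refine ⟨fun i => r (e i) - ∑ j ∈ B, c (e i) j • r j, hli.comp e e.injective,
    fun i => ⟨hV'V (by simpa using hker (e i)), ?_⟩⟩
  exact ⟨insert (e i : Fin k') B, _, (card_insert_le _ _).trans (by omega),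
    sub_sum_eq_sum_insert r (mem_compl.1 (e i).2) (c (e i))⟩

/-- Let `V` be a `k`-dimensional subspace and `R` a `k'`-dimensional subspace
with basis `r_1, …, r_{k'}` such that `R = V' ⊕ E` with `V' ≤ V` and
`dim E = f < k'`.  Then the set `L_f` of linear combinations of at most `f+1`
of the basis vectors contains `k' - f` linearly independent elements of `V`. -/
theorem stmt19 (F : Type*) [Field F] [Fintype F] (n k k' f : ℕ)
    (V V' E R : Submodule F (Fin n → F))
    (hV : finrank F ↥V = k)
    (r : Fin k' → (Fin n → F))
    (hind : LinearIndependent F r)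
    (hspan : R = Submodule.span F (Set.range r))
    (hV'V : V' ≤ V) (hsum : R = V' ⊔ E) (hdisj : V' ⊓ E = ⊥)
    (hE : finrank F ↥E = f) (hf : f < k')
    (L : Set (Fin n → F))
    (hL : L = {x | ∃ (I : Finset (Fin k')) (lam : Fin k' → F),
      I.card ≤ f + 1 ∧ x = ∑ i ∈ I, lam i • r i}) :
    ∃ s : Fin (k' - f) → (Fin n → F),
      LinearIndependent F s ∧ ∀ i, s i ∈ V ∧ s i ∈ L :=
  stmt19_general F n k' f V V' E R r hind hspan hV'V hsum hE L hL
end
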